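/- Suppose |𝒴| = k = 2. Let s = (𝐱_s, 𝐱_t, 𝐲_s) be an (m,n)-sample with positive probability under π, let q be a probability mass function on 𝒳, and let g be any classifier consistent with the source sample (g(x_{s,i}) = y_{s,i} for all i). Then for every δ ∈ (0, 1], with probability at least 1 − δ over f drawn from the posterior ρ(·|s), one has R(g|q, f) ≥ U(s, q)²/4 + e*(s, q)² − √(V/δ), where V is the variance of R(g|q, f') when f' ∼ ρ(·|s). -/

import Mathlib

open Finset
open scoped Classical BigOperators

noncomputable section

/-- A UDA class over input space `X` and label space `Y`: a finitely supported
probability distribution `π` over triples `(p, q, f)`, where `p` and `q` are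
probability mass functions on `X` and `f : X → Y` is a classifier. -/
structure UDAClass (X Y : Type*) [Fintype X] where
  supp : Finset ((X → ℝ) × (X → ℝ) × (X → Y))
  w : ((X → ℝ) × (X → ℝ) × (X → Y)) → ℝ
  w_nonneg : ∀ t, 0 ≤ w t
  w_eq_zero : ∀ t ∉ supp, w t = 0
  w_sum : ∑ t ∈ supp, w t = 1
  p_nonneg : ∀ t ∈ supp, ∀ x, 0 ≤ t.1 x
  p_sum : ∀ t ∈ supp, ∑ x, t.1 x = 1
  q_nonneg : ∀ t ∈ supp, ∀ x, 0 ≤ t.2.1 x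
  q_sum : ∀ t ∈ supp, ∑ x, t.2.1 x = 1

variable {X Y : Type*} [Fintype X] [Fintype Y] [DecidableEq X] [DecidableEq Y]

/-- An `(m,n)`-sample `s = (x_s, x_t, y_s)`. -/
abbrev Sample (X Y : Type*) (m n : ℕ) := (Fin m → X) × (Fin n → X) × (Fin m → Y)

/-- The i.i.d. probability `p^m(xs) = ∏ i, p (xs i)` of a vector. -/
def iidProb {m : ℕ} (p : X → ℝ) (xs : Fin m → X) : ℝ := ∏ i, p (xs i)

/-- The normalizing constant `Z(s)`. -/
def Zval (π : UDAClass X Y) {m n : ℕ} (s : Sample X Y m n) : ℝ :=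
  ∑ t ∈ π.supp, π.w t * iidProb t.1 s.1 * iidProb t.2.1 s.2.1 *
    (if ∀ i, t.2.2 (s.1 i) = s.2.2 i then 1 else 0)

/-- The posterior over classifiers `ρ(f' | s)`. -/
def post (π : UDAClass X Y) {m n : ℕ} (s : Sample X Y m n) (f' : X → Y) : ℝ :=
  (∑ t ∈ π.supp, π.w t * iidProb t.1 s.1 * iidProb t.2.1 s.2.1 *
      (if t.2.2 = f' then 1 else 0) * (if ∀ i, f' (s.1 i) = s.2.2 i then 1 else 0))
    / Zval π s

/-- The aggregated soft classifier `ρ^A(y | x, s)`. -/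
def postA (π : UDAClass X Y) {m n : ℕ} (s : Sample X Y m n) (x : X) (y : Y) : ℝ :=
  ∑ f' : X → Y, post π s f' * (if f' x = y then 1 else 0)

/-- The target-domain risk `R(g | q, f)`. -/
def risk (g : X → Y) (q : X → ℝ) (f : X → Y) : ℝ :=
  ∑ x, q x * (if g x ≠ f x then 1 else 0)

/-- A learner assigns a probability distribution over classifiers to each sample. -/
def IsLearner {m n : ℕ} (A : Sample X Y m n → (X → Y) → ℝ) : Prop :=
  ∀ s, (∀ g, 0 ≤ A s g) ∧ ∑ g : X → Y, A s g = 1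

/-- The sample-wise risk `e(𝒜; s, q)`. -/
def swRisk (π : UDAClass X Y) {m n : ℕ} (A : Sample X Y m n → (X → Y) → ℝ)
    (s : Sample X Y m n) (q : X → ℝ) : ℝ :=
  ∑ x, q x * ∑ f' : X → Y, ∑ g : X → Y,
    post π s f' * A s g * (if f' x ≠ g x then 1 else 0)

/-- The optimal sample-wise risk `e*(s, q)`: the minimum of `e(𝒜; s, q)` over learners. -/
def eStar (π : UDAClass X Y) {m n : ℕ} (s : Sample X Y m n) (q : X → ℝ) : ℝ :=
  sInf {r : ℝ | ∃ A : Sample X Y m n → (X → Y) → ℝ, IsLearner A ∧ swRisk π A s q = r}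

/-- Base-2 Shannon entropy of a distribution on a finite set. -/
def entropy2 {Z : Type*} [Fintype Z] (μ : Z → ℝ) : ℝ :=
  -∑ z, μ z * Real.logb 2 (μ z)

/-- The Posterior Target Label Uncertainty `U(s, q)`. -/
def PTLU (π : UDAClass X Y) {m n : ℕ} (s : Sample X Y m n) (q : X → ℝ) : ℝ :=
  ∑ x, q x * entropy2 (fun y => postA π s x y)

/-- The Empirical Posterior Target Label Uncertainty `Ũ(s)`. -/
def EPTLU (π : UDAClass X Y) {m n : ℕ} (s : Sample X Y m n) : ℝ :=
  (1 / (n : ℝ)) * ∑ i : Fin n, entropy2 (fun y => postA π s (s.2.1 i) y)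

/-- The conditional distribution `π_{F|P,Q}(f' | p, q)`. -/
def condF (π : UDAClass X Y) (p q : X → ℝ) (f' : X → Y) : ℝ :=
  π.w (p, q, f') / ∑ f'' : X → Y, π.w (p, q, f'')

/-- The posterior over classifiers given the infinite-sample observation `(p, q, f_p)`. -/
def postInf (π : UDAClass X Y) (p q : X → ℝ) (f f' : X → Y) : ℝ :=
  (condF π p q f' * (if ∀ x, p x ≠ 0 → f' x = f x then 1 else 0)) /
    ∑ f'' : X → Y, condF π p q f'' * (if ∀ x, p x ≠ 0 → f'' x = f x then 1 else 0)

/-- Aggregation `ρ^A(y | x, p, q, f_p)` of the infinite-sample posterior. -/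
def postAInf (π : UDAClass X Y) (p q : X → ℝ) (f : X → Y) (x : X) (y : Y) : ℝ :=
  ∑ f' : X → Y, postInf π p q f f' * (if f' x = y then 1 else 0)

/-- The restriction `f_p` of a classifier `f` to the support of `p`. -/
def restrictSupp (p : X → ℝ) (f : X → Y) : {x : X // p x ≠ 0} → Y := fun x => f x.1

/-- An infinite-sample learner: maps each observation `(p, q, f_p)` to a
distribution over classifiers. -/
abbrev InfLearner (X Y : Type*) :=
  (p : X → ℝ) → (X → ℝ) → ({x : X // p x ≠ 0} → Y) → ((X → Y) → ℝ)

def IsInfLearner (A : InfLearner X Y) : Prop :=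
  ∀ p q fp, (∀ g, 0 ≤ A p q fp g) ∧ ∑ g : X → Y, A p q fp g = 1

/-- The sample-wise risk `e(𝒜_∞; p, q, f_p)` of an infinite-sample learner. -/
def swRiskInf (π : UDAClass X Y) (A : InfLearner X Y) (p q : X → ℝ) (f : X → Y) : ℝ :=
  ∑ x, q x * ∑ f' : X → Y, ∑ g : X → Y,
    postInf π p q f f' * A p q (restrictSupp p f) g * (if f' x ≠ g x then 1 else 0)

/-- The optimal sample-wise risk `e*(p, q, f_p)` on an infinite-sample observation. -/
def eStarInf (π : UDAClass X Y) (p q : X → ℝ) (f : X → Y) : ℝ :=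
  sInf {r : ℝ | ∃ A : InfLearner X Y, IsInfLearner A ∧ swRiskInf π A p q f = r}

/-- The PTLU `U(p, q, f_p)` on an infinite-sample observation. -/
def PTLUInf (π : UDAClass X Y) (p q : X → ℝ) (f : X → Y) : ℝ :=
  ∑ x, q x * entropy2 (fun y => postAInf π p q f x y)

/-- The expected target-domain risk `R(𝒜 | p, q, f)`. -/
def expRisk {m n : ℕ} (A : Sample X Y m n → (X → Y) → ℝ) (p q : X → ℝ) (f : X → Y) : ℝ :=
  ∑ xs : Fin m → X, ∑ xt : Fin n → X,
    iidProb p xs * iidProb q xt * ∑ g : X → Y, A (xs, xt, fun i => f (xs i)) g * risk g q f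

/-- The overall target-domain risk `R(𝒜)`. -/
def overallRisk (π : UDAClass X Y) {m n : ℕ} (A : Sample X Y m n → (X → Y) → ℝ) : ℝ :=
  ∑ t ∈ π.supp, π.w t * expRisk A t.1 t.2.1 t.2.2

/-- The overall target-domain risk `R(𝒜_∞)` of an infinite-sample learner. -/
def overallRiskInf (π : UDAClass X Y) (A : InfLearner X Y) : ℝ :=
  ∑ t ∈ π.supp, π.w t *
    ∑ g : X → Y, A t.1 t.2.1 (restrictSupp t.1 t.2.2) g * risk g t.2.1 t.2.2

/-! ### Auxiliary analytic lemmas -/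

lemma aux_exp_quad {x : ℝ} (hx : 0 ≤ x) : 1 + x + x^2/2 ≤ Real.exp x := by
  have h := Real.sum_le_exp_of_nonneg hx 3
  simp [Finset.sum_range_succ] at h
  nlinarith [h]

lemma aux_two_mul_le_sinh {x : ℝ} (hx : 0 ≤ x) : 2*x ≤ Real.exp x - Real.exp (-x) := by
  have hs : 1 + x + x^2/2 ≤ Real.exp x := aux_exp_quad hx
  have hexp : Real.exp (-x) = (Real.exp x)⁻¹ := Real.exp_neg x
  have hpos : 0 < Real.exp x := Real.exp_pos x
  have hqpos : (0:ℝ) < 1 + x + x^2/2 := by nlinarith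
  have h1 : (Real.exp x)⁻¹ ≤ (1 + x + x^2/2)⁻¹ := inv_anti₀ hqpos hs
  have h2 : (1 + x + x^2/2) - (1 + x + x^2/2)⁻¹ ≥ 2*x := by
    rw [ge_iff_le, ← sub_nonneg]
    have : (1 + x + x^2/2) - (1 + x + x^2/2)⁻¹ - 2*x
        = ((1 + x + x^2/2)^2 - 1 - 2*x*(1 + x + x^2/2)) / (1 + x + x^2/2) := by
      field_simp
    rw [this]
    apply div_nonneg _ (le_of_lt hqpos)
    nlinarith
  linarith

lemma aux_sqrt_eq_exp_half_log {a : ℝ} (ha : 0 < a) :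
    Real.sqrt a = Real.exp (Real.log a / 2) := by
  rw [Real.sqrt_eq_rpow, Real.rpow_def_of_pos ha]; ring_nf

lemma aux_neg_mul_log_le {a : ℝ} (ha : 0 ≤ a) (ha1 : a ≤ 1) :
    -(a * Real.log a) ≤ Real.sqrt a * (1 - a) := by
  rcases eq_or_lt_of_le ha with h0 | h0
  · simp [← h0]
  · set x := -(Real.log a) / 2 with hxdef
    have hx : 0 ≤ x := by
      have : Real.log a ≤ 0 := Real.log_nonpos ha ha1
      simp [hxdef]; linarith
    have hla : Real.log a = -(2*x) := by simp [hxdef]; ring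
    have hae : a = Real.exp (-(2*x)) := by rw [← hla, Real.exp_log h0]
    have hsq : Real.sqrt a = Real.exp (-x) := by
      rw [aux_sqrt_eq_exp_half_log h0]; congr 1; rw [hla]; ring
    have key := aux_two_mul_le_sinh hx
    have h2 : 2*x*Real.exp (-(2*x)) ≤ Real.exp (-x) - Real.exp (-(3*x)) := by
      have := mul_le_mul_of_nonneg_right key (le_of_lt (Real.exp_pos (-(2*x))))
      calc 2*x*Real.exp (-(2*x)) ≤ (Real.exp x - Real.exp (-x)) * Real.exp (-(2*x)) := this
        _ = Real.exp (-x) - Real.exp (-(3*x)) := by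
            rw [sub_mul, ← Real.exp_add, ← Real.exp_add]; ring_nf
    calc -(a * Real.log a) = 2*x*Real.exp (-(2*x)) := by
          rw [hla]; nth_rewrite 1 [hae]; ring
      _ ≤ Real.exp (-x) - Real.exp (-(3*x)) := h2
      _ = Real.sqrt a * (1 - a) := by
          rw [hsq]; rw [hae]
          rw [mul_sub, mul_one, ← Real.exp_add]; ring_nf

/-- natural-log binary entropy -/
def binH (a : ℝ) : ℝ := -(a * Real.log a) - (1-a) * Real.log (1-a)

lemma binH_nonneg {a : ℝ} (ha : 0 ≤ a) (ha1 : a ≤ 1) : 0 ≤ binH a := by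
  have h1 : Real.log a ≤ 0 := Real.log_nonpos ha ha1
  have h2 : Real.log (1-a) ≤ 0 := Real.log_nonpos (by linarith) (by linarith)
  have := mul_nonneg ha (neg_nonneg.mpr h1)
  have := mul_nonneg (by linarith : (0:ℝ) ≤ 1-a) (neg_nonneg.mpr h2)
  unfold binH; nlinarith

lemma binH_le_A {a : ℝ} (ha : 0 ≤ a) (ha1 : a ≤ 1) :
    binH a ≤ Real.sqrt (a*(1-a)) * (Real.sqrt a + Real.sqrt (1-a)) := by
  have h1 : -(a * Real.log a) ≤ Real.sqrt a * (1 - a) := aux_neg_mul_log_le ha ha1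
  have h2 : -((1-a) * Real.log (1-a)) ≤ Real.sqrt (1-a) * a :=
    (by simpa using aux_neg_mul_log_le (by linarith : (0:ℝ) ≤ 1-a) (by linarith : 1-a ≤ 1))
  have hb : (0:ℝ) ≤ 1-a := by linarith
  have e1 : Real.sqrt a * (1-a) = Real.sqrt (a*(1-a)) * Real.sqrt (1-a) := by
    rw [Real.sqrt_mul ha, mul_assoc, Real.mul_self_sqrt hb]
  have e2 : Real.sqrt (1-a) * a = Real.sqrt (a*(1-a)) * Real.sqrt a := by
    rw [Real.sqrt_mul ha,
      show Real.sqrt a * Real.sqrt (1-a) * Real.sqrt a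
        = Real.sqrt (1-a) * (Real.sqrt a * Real.sqrt a) by ring,
      Real.mul_self_sqrt ha]
  unfold binH
  calc -(a * Real.log a) - (1-a) * Real.log (1-a)
      ≤ Real.sqrt a * (1-a) + Real.sqrt (1-a) * a := by linarith
    _ = Real.sqrt (a*(1-a)) * (Real.sqrt a + Real.sqrt (1-a)) := by rw [e1, e2]; ring

lemma aux_log_series_lb {x : ℝ} (hx : |x| ≤ 0.39) :
    -(x + x^2/2 + x^3/3 + x^4/4) - |x|^5/(1-|x|) ≤ Real.log (1-x) := by
  have h1 : |x| < 1 := lt_of_le_of_lt hx (by norm_num)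
  have h := Real.abs_log_sub_add_sum_range_le h1 4
  rw [abs_le] at h
  have hs : ∑ i ∈ Finset.range 4, x ^ (i + 1) / (↑i + 1)
      = x + x^2/2 + x^3/3 + x^4/4 := by
    simp [Finset.sum_range_succ]; ring
  rw [hs] at h
  linarith [h.1]

lemma aux_D_lower {ε : ℝ} (hε : ε^2 ≤ 0.0376) :
    2*ε^2 - 8.82*ε^4 ≤ (1/2+ε)*Real.log (1+2*ε) + (1/2-ε)*Real.log (1-2*ε) := by
  have habs : |ε| ≤ 0.194 := by
    rw [abs_le]; constructor <;> nlinarith [sq_nonneg ε]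
  have habs2 : |2*ε| ≤ 0.388 := by
    rw [abs_mul, abs_two]; linarith [habs]
  have habs2' : |2*ε| ≤ 0.39 := le_trans habs2 (by norm_num)
  have habsn : |-(2*ε)| ≤ 0.39 := by rw [abs_neg]; exact habs2'
  have h1 := aux_log_series_lb habsn
  have h2 := aux_log_series_lb habs2'
  rw [show (1 : ℝ) - -(2*ε) = 1 + 2*ε by ring] at h1
  rw [abs_neg] at h1
  set E := |2*ε|^5/(1-|2*ε|) with hEdef
  have hEnn : 0 ≤ E := by
    apply div_nonneg (by positivity)
    have := abs_nonneg (2*ε); linarith [habs2]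
  have hE : E ≤ 10.15 * ε^4 := by
    have hnum : |2*ε|^5 ≤ 32 * 0.194 * ε^4 := by
      have e1 : |2*ε|^5 = 32 * (|ε|^4 * |ε|) := by rw [abs_mul, abs_two]; ring
      have e2 : |ε|^4 = ε^4 := by rw [← abs_pow, abs_of_nonneg (by positivity)]
      rw [e1, e2]
      have : ε^4 * |ε| ≤ ε^4 * 0.194 :=
        mul_le_mul_of_nonneg_left habs (by positivity)
      nlinarith
    have hden : (0.612 : ℝ) ≤ 1 - |2*ε| := by linarith [habs2]
    rw [hEdef, div_le_iff₀ (by linarith : (0:ℝ) < 1 - |2*ε|)]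
    have hmono : ε^4 * |2*ε| ≤ ε^4 * 0.388 :=
      mul_le_mul_of_nonneg_left habs2 (by positivity)
    nlinarith [hnum, hmono, sq_nonneg (ε^2)]
  have hw1 : (0:ℝ) ≤ 1/2 + ε := by nlinarith [abs_le.mp habs]
  have hw2 : (0:ℝ) ≤ 1/2 - ε := by nlinarith [abs_le.mp habs]
  have g1 : (1/2+ε) * (-(-(2*ε) + (-(2*ε))^2/2 + (-(2*ε))^3/3 + (-(2*ε))^4/4) - E)
      ≤ (1/2+ε) * Real.log (1+2*ε) := mul_le_mul_of_nonneg_left h1 hw1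
  have g2 : (1/2-ε) * (-((2*ε) + (2*ε)^2/2 + (2*ε)^3/3 + (2*ε)^4/4) - E)
      ≤ (1/2-ε) * Real.log (1-2*ε) := mul_le_mul_of_nonneg_left h2 hw2
  nlinarith [g1, g2, hE, hEnn, sq_nonneg ε, sq_nonneg (ε^2)]

lemma aux_quadcase (L β e2 : ℝ) (hL1 : 0.6931471803 < L) (hL2 : L < 0.6931471808)
    (he2 : 0 ≤ e2) (he2' : e2 ≤ 0.0376) (hβ0 : 0 ≤ β) (hβl : 1.668*e2 ≤ β)
    (hβu : β ≤ 2*e2) : (L - β)^2 ≤ 4*L^2*(1/4 - e2) := by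
  have hLe : (0.6555:ℝ) ≤ L - e2 := by linarith
  have p1 : β^2 ≤ 2*e2*β := by nlinarith
  have q1 : 1.668*e2*(L-e2) ≤ β*(L-e2) := mul_le_mul_of_nonneg_right hβl (by linarith)
  have q2 : 1.668*e2*0.6555 ≤ 1.668*e2*(L-e2) := mul_le_mul_of_nonneg_left hLe (by linarith)
  have r : L^2 ≤ 0.6931471808^2 := by nlinarith
  have r2 : L^2*e2 ≤ 0.6931471808^2*e2 := mul_le_mul_of_nonneg_right r he2
  nlinarith [p1, q1, q2, r2]

set_option maxHeartbeats 1000000 in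
lemma binH_sq_le {a : ℝ} (ha : 0 ≤ a) (ha1 : a ≤ 1) :
    binH a ^ 2 ≤ 4 * Real.log 2 ^ 2 * (a * (1-a)) := by
  have hL1 : (0.6931471803:ℝ) < Real.log 2 := Real.log_two_gt_d9
  have hL2 : Real.log 2 < 0.6931471808 := Real.log_two_lt_d9
  have hb : (0:ℝ) ≤ 1 - a := by linarith
  have hP : 0 ≤ a * (1-a) := mul_nonneg ha hb
  have hH0 : 0 ≤ binH a := binH_nonneg ha ha1
  rcases le_or_gt (a*(1-a)) 0.2124 with hc | hc
  · have hsP : Real.sqrt (a*(1-a)) ≤ 0.46088 := by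
      rw [show (0.46088:ℝ) = Real.sqrt (0.46088^2) from (Real.sqrt_sq (by norm_num)).symm]
      exact Real.sqrt_le_sqrt (by nlinarith)
    have hub := binH_le_A ha ha1
    have hsq : binH a ^ 2 ≤ (Real.sqrt (a*(1-a)) * (Real.sqrt a + Real.sqrt (1-a)))^2 :=
      pow_le_pow_left₀ hH0 hub 2
    have hexp : (Real.sqrt (a*(1-a)) * (Real.sqrt a + Real.sqrt (1-a)))^2
        = (a*(1-a)) * (1 + 2 * Real.sqrt (a*(1-a))) := by
      have h1 : Real.sqrt a ^ 2 = a := Real.sq_sqrt ha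
      have h2 : Real.sqrt (1-a) ^ 2 = 1-a := Real.sq_sqrt hb
      have h3 : Real.sqrt a * Real.sqrt (1-a) = Real.sqrt (a*(1-a)) :=
        (Real.sqrt_mul ha _).symm
      have h4 : Real.sqrt (a*(1-a)) ^ 2 = a*(1-a) := Real.sq_sqrt hP
      nlinarith [h1, h2, h3, h4]
    rw [hexp] at hsq
    have h4L : (1.92176:ℝ) ≤ 4 * Real.log 2 ^ 2 := by nlinarith [hL1]
    have hs1 : 1 + 2 * Real.sqrt (a*(1-a)) ≤ 1.92176 := by linarith
    have : (a*(1-a)) * (1 + 2 * Real.sqrt (a*(1-a))) ≤ 4 * Real.log 2 ^2 * (a*(1-a)) := by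
      calc (a*(1-a)) * (1 + 2 * Real.sqrt (a*(1-a))) ≤ (a*(1-a)) * 1.92176 :=
            mul_le_mul_of_nonneg_left hs1 hP
        _ ≤ 4 * Real.log 2 ^2 * (a*(1-a)) := by nlinarith [mul_nonneg (sub_nonneg.mpr h4L) hP]
    linarith
  · have ha0 : 0 < a := by nlinarith
    have ha1' : a < 1 := by nlinarith
    set ε := a - 1/2 with hεdef
    have hε2 : ε^2 ≤ 0.0376 := by nlinarith
    have hD := aux_D_lower hε2
    rw [show 1+2*ε = 2*a by rw [hεdef]; ring, show 1-2*ε = 2*(1-a) by rw [hεdef]; ring,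
      Real.log_mul (by norm_num) (ne_of_gt ha0),
      Real.log_mul (by norm_num) (by linarith : (1:ℝ)-a ≠ 0)] at hD
    have hDval : (1/2+ε)*(Real.log 2 + Real.log a) + (1/2-ε)*(Real.log 2 + Real.log (1-a))
        = Real.log 2 - binH a := by
      unfold binH; rw [hεdef]; ring
    rw [hDval] at hD
    have hub : binH a ≤ Real.log 2 - (2*ε^2 - 8.82*ε^4) := by linarith
    have hβl : 1.668 * ε^2 ≤ 2*ε^2 - 8.82*ε^4 := by
      nlinarith [mul_nonneg (sq_nonneg ε) (by linarith : (0:ℝ) ≤ 0.0376 - ε^2)]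
    have hβu : 2*ε^2 - 8.82*ε^4 ≤ 2*ε^2 := by nlinarith [sq_nonneg (ε^2)]
    have hPe : a * (1-a) = 1/4 - ε^2 := by rw [hεdef]; ring
    rw [hPe]
    have hβ0 : 0 ≤ 2*ε^2 - 8.82*ε^4 := le_trans (by positivity) hβl
    have hsq : binH a ^2 ≤ (Real.log 2 - (2*ε^2 - 8.82*ε^4))^2 := pow_le_pow_left₀ hH0 hub 2
    have hfin := aux_quadcase (Real.log 2) (2*ε^2 - 8.82*ε^4) (ε^2) hL1 hL2 (sq_nonneg ε)
      hε2 hβ0 hβl hβu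
    linarith
/-! ### Jensen and Chebyshev -/

lemma aux_jensen_sq {ι : Type*} [Fintype ι] (q h : ι → ℝ) (hq : ∀ i, 0 ≤ q i)
    (hq1 : ∑ i, q i = 1) : (∑ i, q i * h i)^2 ≤ ∑ i, q i * h i^2 := by
  have key := Finset.sum_mul_sq_le_sq_mul_sq Finset.univ
    (fun i => Real.sqrt (q i)) (fun i => Real.sqrt (q i) * h i)
  have e1 : ∀ i : ι, Real.sqrt (q i) * (Real.sqrt (q i) * h i) = q i * h i := by
    intro i; rw [← mul_assoc, Real.mul_self_sqrt (hq i)]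
  have e2 : ∀ i : ι, Real.sqrt (q i) ^ 2 = q i := fun i => Real.sq_sqrt (hq i)
  have e3 : ∀ i : ι, (Real.sqrt (q i) * h i)^2 = q i * h i ^2 := by
    intro i; rw [mul_pow, e2]
  rw [Finset.sum_congr rfl (fun i _ => e1 i), Finset.sum_congr rfl (fun i _ => e2 i),
    Finset.sum_congr rfl (fun i _ => e3 i), hq1, one_mul] at key
  exact key

lemma aux_cheb {ι : Type*} [Fintype ι] (ρ R : ι → ℝ) (hρ : ∀ i, 0 ≤ ρ i)
    (hρ1 : ∑ i, ρ i = 1) (δ : ℝ) (hδ : 0 < δ) (B : ℝ)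
    (hB : B ≤ (∑ i, ρ i * R i) - Real.sqrt ((∑ i, ρ i * (R i - ∑ j, ρ j * R j)^2)/δ)) :
    1 - δ ≤ ∑ i ∈ Finset.univ.filter (fun i => B ≤ R i), ρ i := by
  set μ := ∑ j, ρ j * R j with hμ
  set V := ∑ i, ρ i * (R i - μ)^2 with hV
  have hVnn : 0 ≤ V := Finset.sum_nonneg fun i _ => mul_nonneg (hρ i) (sq_nonneg _)
  have hTnn : 0 ≤ Real.sqrt (V/δ) := Real.sqrt_nonneg _
  set S := Finset.univ.filter (fun i => ¬ B ≤ R i) with hS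
  have hsplit := Finset.sum_filter_add_sum_filter_not Finset.univ (fun i => B ≤ R i) ρ
  have hgoal : ∑ i ∈ S, ρ i ≤ δ := by
    have hkey : ∀ i ∈ S, ρ i * (V/δ) ≤ ρ i * (R i - μ)^2 := by
      intro i hi
      rw [hS, Finset.mem_filter] at hi
      have hRi : R i < B := lt_of_not_ge hi.2
      have h1 : Real.sqrt (V/δ) < μ - R i := by nlinarith [hB]
      have h2 : V/δ ≤ (μ - R i)^2 := by
        have := Real.sq_sqrt (div_nonneg hVnn hδ.le)
        nlinarith [hTnn]
      have h3 : (μ - R i)^2 = (R i - μ)^2 := by ring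
      exact mul_le_mul_of_nonneg_left (h3 ▸ h2) (hρ i)
    have hsum : ∑ i ∈ S, ρ i * (V/δ) ≤ V := by
      calc ∑ i ∈ S, ρ i * (V/δ) ≤ ∑ i ∈ S, ρ i * (R i - μ)^2 :=
            Finset.sum_le_sum hkey
        _ ≤ V := Finset.sum_le_sum_of_subset_of_nonneg (Finset.filter_subset _ _)
            (fun i _ _ => mul_nonneg (hρ i) (sq_nonneg _))
    rcases eq_or_lt_of_le hVnn with hV0 | hV0
    · have hSz : ∀ i ∈ S, ρ i = 0 := by
        intro i hi
        by_contra hne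
        have hρi : 0 < ρ i := lt_of_le_of_ne (hρ i) (Ne.symm hne)
        have hRi : R i < B := lt_of_not_ge (Finset.mem_filter.mp hi).2
        have hT0 : Real.sqrt (V/δ) = 0 := by rw [← hV0]; simp
        have h1 : R i < μ := by nlinarith [hB]
        have hsq0 : 0 < (R i - μ)^2 := by
          nlinarith [mul_pos (sub_pos.mpr h1) (sub_pos.mpr h1)]
        have hterm : 0 < ρ i * (R i - μ)^2 := mul_pos hρi hsq0
        have hle : ∑ j ∈ S, ρ j * (R j - μ)^2 ≤ 0 := by
          calc ∑ j ∈ S, ρ j * (R j - μ)^2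
              ≤ ∑ j : ι, ρ j * (R j - μ)^2 := Finset.sum_le_sum_of_subset_of_nonneg
                (Finset.filter_subset _ _) (fun i _ _ => mul_nonneg (hρ i) (sq_nonneg _))
            _ = V := hV.symm
            _ = 0 := hV0.symm
        have hge : ρ i * (R i - μ)^2 ≤ ∑ j ∈ S, ρ j * (R j - μ)^2 :=
          Finset.single_le_sum (f := fun j => ρ j * (R j - μ)^2)
            (fun j _ => mul_nonneg (hρ j) (sq_nonneg _)) hi
        linarith
      have : ∑ i ∈ S, ρ i = 0 := Finset.sum_eq_zero hSz
      linarith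
    · rw [← Finset.sum_mul] at hsum
      have hVδ : 0 < V/δ := div_pos hV0 hδ
      have h1 : (∑ i ∈ S, ρ i) ≤ V / (V/δ) := (le_div_iff₀ hVδ).mpr hsum
      have h2 : V / (V/δ) = δ := by field_simp
      linarith [h2 ▸ h1]
  have hfil : ∑ i ∈ Finset.univ.filter (fun i => B ≤ R i), ρ i = 1 - ∑ i ∈ S, ρ i := by
    rw [hS]; linarith [hsplit, hρ1]
  rw [hfil]; linarith

/-! ### Posterior lemmas -/

lemma aux_post_nonneg (π : UDAClass X Y) {m n : ℕ} (s : Sample X Y m n)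
    (hZ : 0 < Zval π s) (f' : X → Y) : 0 ≤ post π s f' := by
  unfold post
  apply div_nonneg _ hZ.le
  apply Finset.sum_nonneg
  intro t ht
  have h1 : 0 ≤ iidProb t.1 s.1 := by
    unfold iidProb; exact Finset.prod_nonneg fun i _ => π.p_nonneg t ht _
  have h2 : 0 ≤ iidProb t.2.1 s.2.1 := by
    unfold iidProb; exact Finset.prod_nonneg fun i _ => π.q_nonneg t ht _
  have h3 := π.w_nonneg t
  apply mul_nonneg
  apply mul_nonneg
  · apply mul_nonneg (mul_nonneg h3 h1) h2
  · split <;> norm_num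
  · split <;> norm_num

lemma aux_sum_post (π : UDAClass X Y) {m n : ℕ} (s : Sample X Y m n)
    (hZ : 0 < Zval π s) : ∑ f' : X → Y, post π s f' = 1 := by
  unfold post
  rw [← Finset.sum_div]
  rw [Finset.sum_comm]
  have hcon : ∀ t ∈ π.supp,
      (∑ f' : X → Y, π.w t * iidProb t.1 s.1 * iidProb t.2.1 s.2.1 *
        (if t.2.2 = f' then 1 else 0) * (if ∀ i, f' (s.1 i) = s.2.2 i then 1 else 0))
      = π.w t * iidProb t.1 s.1 * iidProb t.2.1 s.2.1 *
        (if ∀ i, t.2.2 (s.1 i) = s.2.2 i then 1 else 0) := by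
    intro t _
    rw [Finset.sum_eq_single t.2.2]
    · simp
    · intro f' _ hne
      simp [Ne.symm hne]
    · intro h; exact absurd (Finset.mem_univ _) h
  rw [Finset.sum_congr rfl hcon]
  exact div_self (ne_of_gt hZ)

lemma aux_postA_nonneg (π : UDAClass X Y) {m n : ℕ} (s : Sample X Y m n)
    (hZ : 0 < Zval π s) (x : X) (y : Y) : 0 ≤ postA π s x y := by
  unfold postA
  apply Finset.sum_nonneg
  intro f' _
  apply mul_nonneg (aux_post_nonneg π s hZ f')
  split <;> norm_num

lemma aux_sum_postA (π : UDAClass X Y) {m n : ℕ} (s : Sample X Y m n)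
    (hZ : 0 < Zval π s) (x : X) : ∑ y : Y, postA π s x y = 1 := by
  unfold postA
  rw [Finset.sum_comm]
  have hcon : ∀ f' : X → Y, (∑ y : Y, post π s f' * (if f' x = y then 1 else 0))
      = post π s f' := by
    intro f'
    rw [← Finset.mul_sum]
    simp
  calc ∑ f' : X → Y, ∑ y : Y, post π s f' * (if f' x = y then 1 else 0)
      = ∑ f' : X → Y, post π s f' := Finset.sum_congr rfl (fun f' _ => hcon f')
    _ = 1 := aux_sum_post π s hZ

lemma aux_postA_le_one (π : UDAClass X Y) {m n : ℕ} (s : Sample X Y m n)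
    (hZ : 0 < Zval π s) (x : X) (y : Y) : postA π s x y ≤ 1 := by
  rw [← aux_sum_postA π s hZ x]
  exact Finset.single_le_sum (fun y' _ => aux_postA_nonneg π s hZ x y') (Finset.mem_univ y)

lemma aux_sum_post_ne (π : UDAClass X Y) {m n : ℕ} (s : Sample X Y m n)
    (hZ : 0 < Zval π s) (x : X) (c : Y) :
    ∑ f' : X → Y, post π s f' * (if f' x ≠ c then 1 else 0)
      = 1 - postA π s x c := by
  have hcon : ∀ f' : X → Y, post π s f' * (if f' x ≠ c then 1 else 0)
      = post π s f' - post π s f' * (if f' x = c then 1 else 0) := by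
    intro f'
    by_cases h : f' x = c <;> simp [h]
  rw [Finset.sum_congr rfl (fun f' _ => hcon f'), Finset.sum_sub_distrib,
    aux_sum_post π s hZ]
  rfl

lemma aux_exp_risk (π : UDAClass X Y) {m n : ℕ} (s : Sample X Y m n)
    (hZ : 0 < Zval π s) (q : X → ℝ) (g : X → Y) :
    ∑ f' : X → Y, post π s f' * risk g q f'
      = ∑ x, q x * (1 - postA π s x (g x)) := by
  have step1 : ∀ f' : X → Y, post π s f' * risk g q f'
      = ∑ x, q x * (post π s f' * (if f' x ≠ g x then 1 else 0)) := by
    intro f'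
    unfold risk
    rw [Finset.mul_sum]
    apply Finset.sum_congr rfl
    intro x _
    have : (if g x ≠ f' x then (1:ℝ) else 0) = (if f' x ≠ g x then 1 else 0) := by
      by_cases h : f' x = g x <;> simp [h, Ne.symm, ne_comm]
    rw [this]; ring
  rw [Finset.sum_congr rfl (fun f' _ => step1 f'), Finset.sum_comm]
  apply Finset.sum_congr rfl
  intro x _
  rw [← Finset.mul_sum, aux_sum_post_ne π s hZ x (g x)]
/-! ### Binary label space -/

lemma aux_two_elt {Y : Type*} [Fintype Y] [DecidableEq Y] (hk : Fintype.card Y = 2)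
    (y : Y) : ∃ y', y' ≠ y ∧ (Finset.univ : Finset Y) = {y, y'} := by
  have h1 : (Finset.univ.erase y).card = 1 := by
    rw [Finset.card_erase_of_mem (Finset.mem_univ y), Finset.card_univ, hk]
  obtain ⟨y', hy'⟩ := Finset.card_eq_one.mp h1
  refine ⟨y', ?_, ?_⟩
  · have : y' ∈ Finset.univ.erase y := hy' ▸ Finset.mem_singleton_self y'
    exact (Finset.mem_erase.mp this).1
  · rw [← Finset.insert_erase (Finset.mem_univ y), hy']

lemma aux_entropy2_pair {Y : Type*} [Fintype Y] [DecidableEq Y]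
    (hk : Fintype.card Y = 2) (μ : Y → ℝ) (y : Y) (hsum : ∑ y', μ y' = 1) :
    entropy2 μ = binH (μ y) / Real.log 2 := by
  obtain ⟨y', hne, huniv⟩ := aux_two_elt hk y
  have hpair : ∑ z : Y, μ z = μ y + μ y' := by
    rw [show (Finset.univ : Finset Y) = {y, y'} from huniv,
      Finset.sum_pair (Ne.symm hne)]
  have hμ' : μ y' = 1 - μ y := by rw [hpair] at hsum; linarith
  have hent : entropy2 μ = -(μ y * Real.logb 2 (μ y) + μ y' * Real.logb 2 (μ y')) := by
    unfold entropy2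
    rw [show (Finset.univ : Finset Y) = {y, y'} from huniv,
      Finset.sum_pair (Ne.symm hne)]
  rw [hent, hμ']
  unfold binH Real.logb
  have hln2 : Real.log 2 ≠ 0 := by
    have := Real.log_two_gt_d9; linarith
  field_simp
  ring

lemma aux_entropy2_sq {Y : Type*} [Fintype Y] [DecidableEq Y]
    (hk : Fintype.card Y = 2) (μ : Y → ℝ) (y : Y) (hsum : ∑ y', μ y' = 1)
    (hnn : ∀ y', 0 ≤ μ y') : entropy2 μ ^ 2 ≤ 4 * (μ y * (1 - μ y)) := by
  have ha : 0 ≤ μ y := hnn y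
  have ha1 : μ y ≤ 1 := by
    rw [← hsum]
    exact Finset.single_le_sum (fun y' _ => hnn y') (Finset.mem_univ y)
  have hL : 0 < Real.log 2 := by have := Real.log_two_gt_d9; linarith
  rw [aux_entropy2_pair hk μ y hsum, div_pow]
  rw [div_le_iff₀ (by positivity)]
  have := binH_sq_le ha ha1
  nlinarith [this]
/-! ### eStar facts -/

lemma aux_swRisk_nonneg (π : UDAClass X Y) {m n : ℕ} (s : Sample X Y m n)
    (hZ : 0 < Zval π s) (q : X → ℝ) (hq0 : ∀ x, 0 ≤ q x)
    (A : Sample X Y m n → (X → Y) → ℝ) (hA : IsLearner A) :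
    0 ≤ swRisk π A s q := by
  unfold swRisk
  apply Finset.sum_nonneg
  intro x _
  apply mul_nonneg (hq0 x)
  apply Finset.sum_nonneg
  intro f' _
  apply Finset.sum_nonneg
  intro g' _
  apply mul_nonneg (mul_nonneg (aux_post_nonneg π s hZ f') ((hA s).1 g'))
  split <;> norm_num

/-- deterministic learner -/
def auxDet {X Y : Type*} [Fintype X] [DecidableEq X] [DecidableEq Y] (m n : ℕ) (G : X → Y) : Sample X Y m n → (X → Y) → ℝ :=
  fun _ g' => if g' = G then 1 else 0

lemma auxDet_isLearner {m n : ℕ} (G : X → Y) : IsLearner (auxDet (X := X) (Y := Y) m n G) := by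
  intro s
  constructor
  · intro g'; unfold auxDet; split <;> norm_num
  · unfold auxDet
    simp

lemma auxDet_swRisk (π : UDAClass X Y) {m n : ℕ} (s : Sample X Y m n)
    (hZ : 0 < Zval π s) (q : X → ℝ) (G : X → Y) :
    swRisk π (auxDet m n G) s q = ∑ x, q x * (1 - postA π s x (G x)) := by
  unfold swRisk auxDet
  apply Finset.sum_congr rfl
  intro x _
  congr 1
  have hinner : ∀ f' : X → Y,
      (∑ g' : X → Y, post π s f' * (if g' = G then 1 else 0) *
        (if f' x ≠ g' x then 1 else 0))
      = post π s f' * (if f' x ≠ G x then 1 else 0) := by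
    intro f'
    rw [Finset.sum_eq_single G]
    · simp
    · intro g' _ hne; simp [hne]
    · intro h; exact absurd (Finset.mem_univ _) h
  rw [Finset.sum_congr rfl (fun f' _ => hinner f')]
  exact aux_sum_post_ne π s hZ x (G x)
/-- Theorem 3, case `k = 2`: for any classifier `g` consistent with
the source sample and any `δ ∈ (0,1]`, with probability at least `1 − δ` over
`f ∼ ρ(·|s)`, `R(g|q,f) ≥ U(s,q)²/4 + e*(s,q)² − √(V/δ)`, where `V` is the posterior
variance of `R(g|q,·)`. -/
theorem risk_high_prob_lower_bound_of_card_eq_two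
    {X Y : Type*} [Fintype X] [Nonempty X] [Fintype Y] [DecidableEq X] [DecidableEq Y]
    (hk : Fintype.card Y = 2)
    (π : UDAClass X Y) {m n : ℕ} (s : Sample X Y m n) (hZ : 0 < Zval π s)
    (q : X → ℝ) (hq0 : ∀ x, 0 ≤ q x) (hq1 : ∑ x, q x = 1)
    (g : X → Y) (hg : ∀ i, g (s.1 i) = s.2.2 i)
    (δ : ℝ) (hδ0 : 0 < δ) (hδ1 : δ ≤ 1) :
    1 - δ ≤
      ∑ f' ∈ Finset.univ.filter (fun f' : X → Y =>
          (PTLU π s q) ^ 2 / 4 + (eStar π s q) ^ 2 -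
            Real.sqrt ((∑ f'' : X → Y, post π s f'' *
              (risk g q f'' - ∑ f₀ : X → Y, post π s f₀ * risk g q f₀) ^ 2) / δ)
            ≤ risk g q f'),
        post π s f' := by

  classical
  -- abbreviations
  have hρnn : ∀ f' : X → Y, 0 ≤ post π s f' := aux_post_nonneg π s hZ
  have hρ1 : ∑ f' : X → Y, post π s f' = 1 := aux_sum_post π s hZ
  have hY : Nonempty Y := Fintype.card_pos_iff.mp (by rw [hk]; norm_num)
  -- argmax labels
  have hmax : ∀ x : X, ∃ y : Y, ∀ y' : Y, postA π s x y' ≤ postA π s x y := by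
    intro x
    obtain ⟨y, -, hy⟩ := Finset.exists_max_image Finset.univ (postA π s x)
      ⟨Classical.arbitrary Y, Finset.mem_univ _⟩
    exact ⟨y, fun y' => hy y' (Finset.mem_univ _)⟩
  choose G hG using hmax
  set M : ℝ := ∑ x, q x * (1 - postA π s x (G x)) with hMdef
  -- eStar facts
  have hmem : M ∈ {r : ℝ | ∃ A : Sample X Y m n → (X → Y) → ℝ,
      IsLearner A ∧ swRisk π A s q = r} :=
    ⟨auxDet m n G, auxDet_isLearner G, auxDet_swRisk π s hZ q G⟩
  have hbdd : BddBelow {r : ℝ | ∃ A : Sample X Y m n → (X → Y) → ℝ,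
      IsLearner A ∧ swRisk π A s q = r} := by
    refine ⟨0, ?_⟩
    rintro r ⟨A, hA, rfl⟩
    exact aux_swRisk_nonneg π s hZ q hq0 A hA
  have hE0 : 0 ≤ eStar π s q := by
    apply le_csInf ⟨M, hmem⟩
    rintro r ⟨A, hA, rfl⟩
    exact aux_swRisk_nonneg π s hZ q hq0 A hA
  have hEle : eStar π s q ≤ M := csInf_le hbdd hmem
  -- pointwise inequality
  have hpoint : ∀ x : X,
      (entropy2 (fun y => postA π s x y))^2/4 + (1 - postA π s x (G x))^2
        ≤ 1 - postA π s x (g x) := by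
    intro x
    set a : ℝ := postA π s x (g x) with hadef
    set mv : ℝ := postA π s x (G x) with hmdef
    have hsum : ∑ y : Y, postA π s x y = 1 := aux_sum_postA π s hZ x
    have hnn : ∀ y : Y, 0 ≤ postA π s x y := aux_postA_nonneg π s hZ x
    have hsqE := aux_entropy2_sq hk (fun y => postA π s x y) (g x) hsum hnn
    have ha0 : 0 ≤ a := hnn (g x)
    have ha1 : a ≤ 1 := aux_postA_le_one π s hZ x (g x)
    have hm1 : mv ≤ 1 := aux_postA_le_one π s hZ x (G x)
    have ham : a ≤ mv := hG x (g x)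
    obtain ⟨y', hne, huniv⟩ := aux_two_elt hk (g x)
    have hpair : a + postA π s x y' = 1 := by
      rw [hadef, ← hsum, show (Finset.univ : Finset Y) = {g x, y'} from huniv,
        Finset.sum_pair (Ne.symm hne)]
    have hy'le : postA π s x y' ≤ mv := hG x y'
    have h1ma : 1 - mv ≤ a := by linarith
    have h1m1a : 1 - mv ≤ 1 - a := by linarith
    have hm0 : 0 ≤ 1 - mv := by linarith
    have hsqE' : (entropy2 (fun y => postA π s x y))^2 ≤ 4*a - 4*a^2 := by
      nlinarith [hsqE]
    rcases le_total a (1/2) with hc | hc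
    · have hmm2 : (1 - mv)^2 ≤ a^2 := by nlinarith
      linarith [hsqE', hmm2]
    · have hmm2 : (1 - mv)^2 ≤ (1-a)^2 := by nlinarith
      nlinarith [hsqE', hmm2]
  -- mean of risk
  have hmean : ∑ f' : X → Y, post π s f' * risk g q f'
      = ∑ x, q x * (1 - postA π s x (g x)) := aux_exp_risk π s hZ q g
  -- Jensen
  have hJ1 : (PTLU π s q)^2 ≤ ∑ x, q x * (entropy2 (fun y => postA π s x y))^2 := by
    have := aux_jensen_sq q (fun x => entropy2 (fun y => postA π s x y)) hq0 hq1
    unfold PTLU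
    exact this
  have hJ2 : M^2 ≤ ∑ x, q x * (1 - postA π s x (G x))^2 := by
    have := aux_jensen_sq q (fun x => 1 - postA π s x (G x)) hq0 hq1
    rw [hMdef]
    exact this
  -- sum the pointwise inequality
  have hsum_pt : ∑ x, q x * ((entropy2 (fun y => postA π s x y))^2/4
        + (1 - postA π s x (G x))^2)
      ≤ ∑ x, q x * (1 - postA π s x (g x)) :=
    Finset.sum_le_sum (fun x _ => mul_le_mul_of_nonneg_left (hpoint x) (hq0 x))
  have hexpand : ∑ x, q x * ((entropy2 (fun y => postA π s x y))^2/4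
        + (1 - postA π s x (G x))^2)
      = (∑ x, q x * (entropy2 (fun y => postA π s x y))^2)/4
        + ∑ x, q x * (1 - postA π s x (G x))^2 := by
    rw [Finset.sum_div, ← Finset.sum_add_distrib]
    apply Finset.sum_congr rfl
    intro x _
    ring
  have hE2 : (eStar π s q)^2 ≤ M^2 := pow_le_pow_left₀ hE0 hEle 2
  have hcomb : (PTLU π s q)^2/4 + (eStar π s q)^2
      ≤ ∑ f' : X → Y, post π s f' * risk g q f' := by
    rw [hmean]
    linarith [hJ1, hJ2, hsum_pt, hexpand ▸ hsum_pt, hE2]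
  -- Chebyshev
  apply aux_cheb (post π s) (risk g q) hρnn hρ1 δ hδ0
  linarith [hcomb]

end
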